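/- arXiv:1210.2456 — 3 statements merged into one kernel-verified Lean document; each statement's English description precedes it below -/
import Mathlib

section
/- For every KAT expression e and every word x ∈ (At·Σ)*, the iterated partial derivative satisfies Δ̂_x(e) ⊆ PD(e). -/
namespace KAT

variable {T A : Type} [DecidableEq A]

/-- Atoms: truth assignments to the primitive tests. -/
abbrev Atom (T : Type) := T → Bool

/-- A guarded string `α₁p₁α₂p₂⋯p_{n-1}αₙ`, as the list of (atom, action)
pairs together with the final atom. -/
structure GStr (T A : Type) where
  pairs : List (Atom T × A)
  last : Atom T

/-- The first atom of a guarded string. -/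
def GStr.first (x : GStr T A) : Atom T :=
  match x.pairs with
  | [] => x.last
  | (α, _) :: _ => α

/-- Fusion product on sets of guarded strings. -/
def fprod (X Y : Set (GStr T A)) : Set (GStr T A) :=
  {z | ∃ x ∈ X, ∃ y ∈ Y, x.last = y.first ∧ z = ⟨x.pairs ++ y.pairs, y.last⟩}

/-- The set of atoms, viewed as guarded strings. -/
def atomsGS : Set (GStr T A) := {z | z.pairs = []}

/-- Fusion powers: `X⁰ = At`, `X^{n+1} = X ⋄ Xⁿ`. -/
def fpow (X : Set (GStr T A)) : ℕ → Set (GStr T A)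
  | 0 => atomsGS
  | n + 1 => fprod X (fpow X n)

/-- `X* = ∪ₙ Xⁿ`. -/
def fstar (X : Set (GStr T A)) : Set (GStr T A) := ⋃ n, fpow X n

/-- Derivative of a set of guarded strings w.r.t. `αp`. -/
def gderiv (α : Atom T) (p : A) (R : Set (GStr T A)) : Set (GStr T A) :=
  {y | (⟨(α, p) :: y.pairs, y.last⟩ : GStr T A) ∈ R}

/-- Boolean expressions over primitive tests `T`. -/
inductive BExp (T : Type) where
  | zero | one
  | test (t : T)
  | not (b : BExp T)
  | or (b₁ b₂ : BExp T)
  | and (b₁ b₂ : BExp T)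

/-- Evaluation of a Boolean expression at an atom (`α ≤ b`). -/
def BExp.eval (α : Atom T) : BExp T → Bool
  | .zero => false
  | .one => true
  | .test t => α t
  | .not b => !(b.eval α)
  | .or b₁ b₂ => b₁.eval α || b₂.eval α
  | .and b₁ b₂ => b₁.eval α && b₂.eval α

/-- KAT expressions over actions `Σ = A` and tests `T`. -/
inductive KExp (T A : Type) where
  | act (p : A)
  | test (b : BExp T)
  | plus (e₁ e₂ : KExp T A)
  | cat (e₁ e₂ : KExp T A)
  | star (e : KExp T A)

/-- Guarded-string semantics of a KAT expression. -/
def gs : KExp T A → Set (GStr T A)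
  | .act p => {z | ∃ α β, z = ⟨[(α, p)], β⟩}
  | .test b => {z | z.pairs = [] ∧ b.eval z.last = true}
  | .plus e₁ e₂ => gs e₁ ∪ gs e₂
  | .cat e₁ e₂ => fprod (gs e₁) (gs e₂)
  | .star e => fstar (gs e)

/-- Syntactic evaluation `E_α`. -/
def Eps (α : Atom T) : KExp T A → Bool
  | .act _ => false
  | .test b => b.eval α
  | .plus e₁ e₂ => Eps α e₁ || Eps α e₂
  | .cat e₁ e₂ => Eps α e₁ && Eps α e₂
  | .star _ => true

/-- `Γ · e`, with `Γ·0 = ∅` and `Γ·1 = Γ`. -/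
def prodSet (Γ : Set (KExp T A)) : KExp T A → Set (KExp T A)
  | .test .zero => ∅
  | .test .one => Γ
  | e => {x | ∃ e' ∈ Γ, x = .cat e' e}

/-- Partial derivatives `Δ_{αp}(e)`. -/
def pd (α : Atom T) (p : A) : KExp T A → Set (KExp T A)
  | .act p' => if p = p' then {.test .one} else ∅
  | .test _ => ∅
  | .plus e₁ e₂ => pd α p e₁ ∪ pd α p e₂
  | .cat e₁ e₂ => prodSet (pd α p e₁) e₂ ∪ (if Eps α e₁ then pd α p e₂ else ∅)
  | .star e => prodSet (pd α p e) (.star e)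

/-- Guarded-string semantics of a set of expressions. -/
def gsSet (E : Set (KExp T A)) : Set (GStr T A) := ⋃ e ∈ E, gs e

/-- Partial derivative of a set of expressions. -/
def pdS (α : Atom T) (p : A) (E : Set (KExp T A)) : Set (KExp T A) :=
  ⋃ e ∈ E, pd α p e

/-- Iterated partial derivative `Δ̂_w(e)` along a word `w ∈ (At·Σ)*`. -/
def pdWord (w : List (Atom T × A)) (e : KExp T A) : Set (KExp T A) :=
  w.foldl (fun E x => pdS x.1 x.2 E) {e}

/-- The closure `PD(e)`. -/
def PD : KExp T A → Set (KExp T A)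
  | .test b => {.test b}
  | .act p => {.act p, .test .one}
  | .plus e₁ e₂ => {.plus e₁ e₂} ∪ PD e₁ ∪ PD e₂
  | .cat e₁ e₂ => {.cat e₁ e₂} ∪ prodSet (PD e₁) e₂ ∪ PD e₂
  | .star e => {.star e} ∪ prodSet (PD e) (.star e)

/-- Number of symbols in the syntactic tree of a Boolean expression. -/
def BExp.size : BExp T → ℕ
  | .zero => 1 | .one => 1 | .test _ => 1
  | .not b => b.size + 1
  | .or b₁ b₂ => b₁.size + b₂.size + 1
  | .and b₁ b₂ => b₁.size + b₂.size + 1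

/-- Number of symbols in the syntactic tree of a KAT expression. -/
def KExp.size : KExp T A → ℕ
  | .act _ => 1
  | .test b => b.size
  | .plus e₁ e₂ => e₁.size + e₂.size + 1
  | .cat e₁ e₂ => e₁.size + e₂.size + 1
  | .star e => e.size + 1

/-- A set of assumptions `Γ`: equations `b p b̄' = 0` and inequalities `c ≤ c'`. -/
structure Gamma (T A : Type) where
  eqns : List (BExp T × A × BExp T)
  ineqs : List (BExp T × BExp T)

/-- `α ∈ At^Γ`. -/
def inAtG (G : Gamma T A) (α : Atom T) : Bool :=
  G.ineqs.all fun cc => !(cc.1.eval α) || cc.2.eval α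

/-- The atoms of `At^Γ`, viewed as guarded strings. -/
def atomsG (G : Gamma T A) : Set (GStr T A) := {z | z.pairs = [] ∧ inAtG G z.last = true}

/-- Γ-restricted fusion powers (base case `At^Γ`). -/
def fpowG (G : Gamma T A) (X : Set (GStr T A)) : ℕ → Set (GStr T A)
  | 0 => atomsG G
  | n + 1 => fprod X (fpowG G X n)

def fstarG (G : Gamma T A) (X : Set (GStr T A)) : Set (GStr T A) := ⋃ n, fpowG G X n

/-- The Γ-restricted guarded-string semantics `GS^Γ`. -/
def gsG (G : Gamma T A) : KExp T A → Set (GStr T A)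
  | .act p => {z | ∃ α β, inAtG G α = true ∧ inAtG G β = true ∧
      (∀ x ∈ G.eqns, x.2.1 = p → x.1.eval α = true → x.2.2.eval β = true) ∧
      z = ⟨[(α, p)], β⟩}
  | .test b => {z | z.pairs = [] ∧ inAtG G z.last = true ∧ b.eval z.last = true}
  | .plus e₁ e₂ => gsG G e₁ ∪ gsG G e₂
  | .cat e₁ e₂ => fprod (gsG G e₁) (gsG G e₂)
  | .star e => fstarG G (gsG G e)

def gsSetG (G : Gamma T A) (E : Set (KExp T A)) : Set (GStr T A) := ⋃ e ∈ E, gsG G e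

/-- Sum of a list of KAT expressions. -/
def sumList (l : List (KExp T A)) : KExp T A := l.foldr .plus (.test .zero)

/-- The universal expression `u = (p₁ + ⋯ + p_k)*`. -/
def uExp (ps : List A) : KExp T A := .star (sumList (ps.map .act))

/-- `r = Σᵢ bᵢpᵢb̄ᵢ' + Σⱼ cⱼc̄ⱼ'`. -/
def rExp (G : Gamma T A) : KExp T A :=
  sumList
    (G.eqns.map (fun x => .cat (.cat (.test x.1) (.act x.2.1)) (.test (.not x.2.2))) ++
     G.ineqs.map (fun x => .cat (.test x.1) (.test (.not x.2))))

/-- The expression `u r u`. -/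
def uru (G : Gamma T A) (ps : List A) : KExp T A :=
  .cat (.cat (uExp ps) (rExp G)) (uExp ps)

/-- `Π{b' | (b p b̄' = 0) ∈ Γ, α ≤ b}` (equal to `1` if there are none). -/
def gammaProd (G : Gamma T A) (α : Atom T) (p : A) : BExp T :=
  ((G.eqns.filter fun x => decide (x.2.1 = p) && x.1.eval α).map fun x => x.2.2).foldr .and .one

def pdGaux (G : Gamma T A) (α : Atom T) (p : A) : KExp T A → Set (KExp T A)
  | .act p' => if p = p' then {.test (gammaProd G α p)} else ∅
  | .test _ => ∅
  | .plus e₁ e₂ => pdGaux G α p e₁ ∪ pdGaux G α p e₂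
  | .cat e₁ e₂ => prodSet (pdGaux G α p e₁) e₂ ∪ (if Eps α e₁ then pdGaux G α p e₂ else ∅)
  | .star e => prodSet (pdGaux G α p e) (.star e)

/-- The Γ-partial derivative `Δ^Γ_{αp}(e)`. -/
def pdG (G : Gamma T A) (α : Atom T) (p : A) (e : KExp T A) : Set (KExp T A) :=
  if inAtG G α then pdGaux G α p e else ∅

/-- The atoms occurring in a guarded string. -/
def atomsOf (x : GStr T A) : List (Atom T) := x.pairs.map Prod.fst ++ [x.last]

/-- The substrings `α p β` of a guarded string. -/
def triplesOf (x : GStr T A) : List (Atom T × A × Atom T) :=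
  List.zipWith (fun ap β => (ap.1, ap.2, β)) x.pairs
    ((x.pairs.map Prod.fst).drop 1 ++ [x.last])

/-- `Γ·e` on transition pairs, with `Γ·0 = ∅` and `Γ·1 = Γ`. -/
def prodPairs (Γ : Set ((Atom T × A) × KExp T A)) :
    KExp T A → Set ((Atom T × A) × KExp T A)
  | .test .zero => ∅
  | .test .one => Γ
  | e => {x | ∃ y ∈ Γ, x = (y.1, .cat y.2 e)}

/-- The transition function `𝖿`. -/
def fset : KExp T A → Set ((Atom T × A) × KExp T A)
  | .act p => {x | ∃ α : Atom T, x = ((α, p), .test .one)}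
  | .test _ => ∅
  | .plus e₁ e₂ => fset e₁ ∪ fset e₂
  | .cat e₁ e₂ => prodPairs (fset e₁) e₂ ∪ {x ∈ fset e₂ | Eps x.1.1 e₁ = true}
  | .star e => prodPairs (fset e) (.star e)

/-- `der_{αp}(e) = {e' | (αp, e') ∈ 𝖿(e)}`. -/
def der (α : Atom T) (p : A) (e : KExp T A) : Set (KExp T A) :=
  {e' | ((α, p), e') ∈ fset e}

end KAT

/-! `PD e` contains `e` and every partial derivative of `e`, and it is transitive
(`e' ∈ PD e → PD e' ⊆ PD e`). Hence `PD e` is closed under `pdS`, and induction on the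
word gives the claim. Transitivity goes by structural induction on `e`, the products
`Γ · e₂` of the `cat` and `star` clauses being treated once and for all. -/

namespace KAT

variable {T A : Type}

lemma prodSet_eq_of_ne {Γ : Set (KExp T A)} {e : KExp T A} (h₀ : e ≠ .test .zero)
    (h₁ : e ≠ .test .one) : prodSet Γ e = {x | ∃ e' ∈ Γ, x = .cat e' e} := by
  rcases e with _ | ((_ | _) | _ | _ | _ | _) | _ | _ | _ <;> first | contradiction | rfl

lemma prodSet_mono {Γ Δ : Set (KExp T A)} (h : Γ ⊆ Δ) (e : KExp T A) :
    prodSet Γ e ⊆ prodSet Δ e := by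
  rcases e with _ | ((_ | _) | _ | _ | _ | _) | _ | _ | _ <;>
    first
    | exact h
    | exact subset_rfl
    | rintro _ ⟨e', he', rfl⟩; exact ⟨e', h he', rfl⟩

lemma mem_PD_self (e : KExp T A) : e ∈ PD e := by
  cases e <;> simp [PD]

lemma PD_subset_of_mem_prodSet {Γ S : Set (KExp T A)} {e x : KExp T A}
    (hΓ : ∀ e' ∈ Γ, PD e' ⊆ S) (hx : x ∈ prodSet Γ e) : PD x ⊆ prodSet S e ∪ PD e := by
  by_cases h₀ : e = .test .zero
  · subst h₀
    exact hx.elim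
  by_cases h₁ : e = .test .one
  · subst h₁
    exact (hΓ x hx).trans Set.subset_union_left
  have hcat : ∀ e' ∈ S, .cat e' e ∈ prodSet S e := by
    rw [prodSet_eq_of_ne h₀ h₁]
    exact fun e' he' => ⟨e', he', rfl⟩
  rw [prodSet_eq_of_ne h₀ h₁] at hx
  obtain ⟨e', he', rfl⟩ := hx
  rintro y ((rfl | hy) | hy)
  · exact .inl (hcat e' (hΓ e' he' (mem_PD_self e')))
  · exact .inl (prodSet_mono (hΓ e' he') e hy)
  · exact .inr hy

lemma PD_subset_PD_of_mem {e e' : KExp T A} (he' : e' ∈ PD e) : PD e' ⊆ PD e := by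
  induction e generalizing e' with
  | act p =>
    rcases he' with rfl | rfl
    · exact subset_rfl
    · simp [PD]
  | test b =>
    rw [he']
  | plus e₁ e₂ ih₁ ih₂ =>
    rcases he' with (rfl | h) | h
    · exact subset_rfl
    · exact (ih₁ h).trans fun _ hy => .inl (.inr hy)
    · exact (ih₂ h).trans Set.subset_union_right
  | cat e₁ e₂ ih₁ ih₂ =>
    rcases he' with (rfl | h) | h
    · exact subset_rfl
    · exact (PD_subset_of_mem_prodSet (fun _ => ih₁) h).trans
        (Set.union_subset_union_left _ Set.subset_union_right)
    · exact (ih₂ h).trans Set.subset_union_right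
  | star e ih =>
    rcases he' with rfl | h
    · exact subset_rfl
    · exact (PD_subset_of_mem_prodSet (fun _ => ih) h).trans
        (Set.union_subset Set.subset_union_right subset_rfl)

variable [DecidableEq A]

lemma pd_subset_PD (α : Atom T) (p : A) (e : KExp T A) : pd α p e ⊆ PD e := by
  induction e with
  | act p' =>
    simp only [pd]
    split_ifs with h
    · simp [PD]
    · exact Set.empty_subset _
  | test b => exact Set.empty_subset _
  | plus e₁ e₂ ih₁ ih₂ => exact Set.union_subset_union (ih₁.trans Set.subset_union_right) ih₂
  | cat e₁ e₂ ih₁ ih₂ =>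
    refine Set.union_subset_union ((prodSet_mono ih₁ e₂).trans Set.subset_union_right) ?_
    split_ifs
    exacts [ih₂, Set.empty_subset _]
  | star e ih => exact (prodSet_mono ih _).trans Set.subset_union_right

lemma pdS_PD_subset_PD (α : Atom T) (p : A) (e : KExp T A) : pdS α p (PD e) ⊆ PD e :=
  Set.iUnion₂_subset fun _ he' => (pd_subset_PD α p _).trans (PD_subset_PD_of_mem he')

lemma pdS_mono (α : Atom T) (p : A) {E F : Set (KExp T A)} (h : E ⊆ F) :
    pdS α p E ⊆ pdS α p F :=
  Set.biUnion_subset_biUnion_left h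

lemma pdWord_append_singleton (w : List (Atom T × A)) (α : Atom T) (p : A) (e : KExp T A) :
    pdWord (w ++ [(α, p)]) e = pdS α p (pdWord w e) :=
  List.foldl_append ..

end KAT

open KAT in
/-- `Δ̂_x(e) ⊆ PD(e)` for every word `x ∈ (At·Σ)*`. -/
theorem pdWord_subset_PD {T A : Type} [DecidableEq A]
    (e : KExp T A) (x : List (Atom T × A)) :
    pdWord x e ⊆ PD e := by
  induction x using List.reverseRecOn with
  | nil => exact Set.singleton_subset_iff.mpr (mem_PD_self e)
  | append_singleton w a ih =>
    rw [pdWord_append_singleton]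
    exact (pdS_mono a.1 a.2 ih).trans (pdS_PD_subset_PD a.1 a.2 e)
end

section
/- A guarded string x = α₁p₁α₂p₂⋯p_{n-1}αₙ belongs to GS(e) if and only if E_{αₙ}(e') = 1 for some e' ∈ Δ̂_{α₁p₁⋯α_{n-1}p_{n-1}}(e). In particular, membership of a guarded string in GS(e) is decided by iterated partial derivatives. -/
/-! Partial derivatives compute the semantic left quotient:
`GS(Δ_{αp}(e)) = {y | αp·y ∈ GS(e)}`, by structural induction on `e`, since the
quotient of a fusion product `X ⋄ Y` is `(αp)⁻¹X ⋄ Y` plus `(αp)⁻¹Y` when the atom `α`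
lies in `X`, and the quotient of `X*` is `(αp)⁻¹X ⋄ X*`. Iterating along `w` leaves the
question whether the bare atom `β` lies in `GS(Δ̂_w(e))`, and an atom lies in `GS(e')`
exactly when `E_β(e') = 1`. -/

namespace KAT

section Semantics

variable {T A : Type}

@[simp]
lemma mem_gderiv {α : Atom T} {p : A} {R : Set (GStr T A)} {y : GStr T A} :
    y ∈ gderiv α p R ↔ (⟨(α, p) :: y.pairs, y.last⟩ : GStr T A) ∈ R := Iff.rfl

lemma mk_nil_mem_fprod_iff {X Y : Set (GStr T A)} {β : Atom T} :
    (⟨[], β⟩ : GStr T A) ∈ fprod X Y ↔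
      (⟨[], β⟩ : GStr T A) ∈ X ∧ (⟨[], β⟩ : GStr T A) ∈ Y := by
  constructor
  · rintro ⟨⟨xs, γ⟩, hx, ⟨ys, δ⟩, hy, hγ, hz⟩
    simp only [GStr.mk.injEq, List.nil_eq_append_iff] at hz
    obtain ⟨⟨rfl, rfl⟩, rfl⟩ := hz
    rw [show γ = β from hγ] at hx
    exact ⟨hx, hy⟩
  · rintro ⟨hx, hy⟩
    exact ⟨_, hx, _, hy, rfl, rfl⟩

lemma mk_nil_mem_gs_iff (e : KExp T A) (β : Atom T) :
    (⟨[], β⟩ : GStr T A) ∈ gs e ↔ Eps β e = true := by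
  induction e with
  | act p => simp [gs, Eps]
  | test b => simp [gs, Eps]
  | plus e₁ e₂ ih₁ ih₂ => simp [gs, Eps, ih₁, ih₂]
  | cat e₁ e₂ ih₁ ih₂ => simp [gs, Eps, mk_nil_mem_fprod_iff, ih₁, ih₂]
  | star e => simpa [gs, Eps, fstar] using ⟨0, rfl⟩

lemma fprod_biUnion_left {ι : Type} (s : Set ι) (f : ι → Set (GStr T A))
    (Y : Set (GStr T A)) :
    fprod (⋃ i ∈ s, f i) Y = ⋃ i ∈ s, fprod (f i) Y := by
  ext z
  simp only [fprod, Set.mem_iUnion, Set.mem_ofPred_eq]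
  constructor
  · rintro ⟨x, ⟨i, hi, hx⟩, hxy⟩
    exact ⟨i, hi, x, hx, hxy⟩
  · rintro ⟨i, hi, x, hx, hxy⟩
    exact ⟨x, ⟨i, hi, hx⟩, hxy⟩

lemma fprod_atomsGS_right (X : Set (GStr T A)) : fprod X atomsGS = X := by
  ext z
  constructor
  · rintro ⟨⟨xs, γ⟩, hx, ⟨ys, δ⟩, rfl, hγ, rfl⟩
    obtain rfl : γ = δ := hγ
    simpa using hx
  · intro hz
    exact ⟨z, hz, ⟨[], z.last⟩, rfl, rfl, by simp⟩

lemma fprod_empty_right (X : Set (GStr T A)) : fprod X ∅ = ∅ := by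
  simp [fprod]

lemma gderiv_fprod (α : Atom T) (p : A) (X Y : Set (GStr T A)) :
    gderiv α p (fprod X Y) =
      fprod (gderiv α p X) Y ∪ {z ∈ gderiv α p Y | (⟨[], α⟩ : GStr T A) ∈ X} := by
  ext ⟨zs, ζ⟩
  constructor
  · rintro ⟨⟨_ | ⟨ap, xs⟩, γ⟩, hx, ⟨ys, δ⟩, hy, hγ, hz⟩
    · simp only [List.nil_append, GStr.mk.injEq] at hz
      obtain ⟨rfl, rfl⟩ := hz
      obtain rfl : γ = α := hγ
      exact Or.inr ⟨hy, hx⟩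
    · simp only [List.cons_append, GStr.mk.injEq, List.cons.injEq] at hz
      obtain ⟨⟨rfl, rfl⟩, rfl⟩ := hz
      exact Or.inl ⟨⟨xs, γ⟩, hx, _, hy, hγ, rfl⟩
  · rintro (⟨⟨xs, γ⟩, hx, ⟨ys, δ⟩, hy, hγ, hz⟩ | ⟨hz, hα⟩)
    · simp only [GStr.mk.injEq] at hz
      obtain ⟨rfl, rfl⟩ := hz
      exact ⟨_, hx, _, hy, hγ, rfl⟩
    · exact ⟨⟨[], α⟩, hα, _, hz, rfl, rfl⟩

lemma gderiv_fstar (α : Atom T) (p : A) (X : Set (GStr T A)) :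
    gderiv α p (fstar X) = fprod (gderiv α p X) (fstar X) := by
  ext z
  constructor
  · rintro ⟨_, ⟨n, rfl⟩, hn⟩
    induction n generalizing z with
    | zero => simp [fpow, atomsGS] at hn
    | succ n ih =>
      rcases (gderiv_fprod α p X (fpow X n)).subset hn with ⟨x, hx, y, hy, hxy⟩ | ⟨hz, -⟩
      · exact ⟨x, hx, y, Set.mem_iUnion_of_mem n hy, hxy⟩
      · exact ih z hz
  · rintro ⟨x, hx, y, hy, hxy, rfl⟩
    obtain ⟨n, hn⟩ := Set.mem_iUnion.mp hy
    exact Set.mem_iUnion_of_mem (n + 1) ⟨_, hx, y, hn, hxy, rfl⟩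

lemma gderiv_biUnion {ι : Type} (α : Atom T) (p : A) (s : Set ι)
    (f : ι → Set (GStr T A)) :
    gderiv α p (⋃ i ∈ s, f i) = ⋃ i ∈ s, gderiv α p (f i) := by
  ext z
  simp

lemma gs_test_one : gs (.test .one : KExp T A) = atomsGS := by
  ext z; simp [gs, atomsGS, BExp.eval]

lemma gs_test_zero : gs (.test .zero : KExp T A) = ∅ := by
  ext z; simp [gs, BExp.eval]

lemma gsSet_singleton (e : KExp T A) : gsSet {e} = gs e := by
  simp [gsSet]

lemma gsSet_empty : gsSet (∅ : Set (KExp T A)) = ∅ := by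
  simp [gsSet]

lemma gsSet_union (E F : Set (KExp T A)) : gsSet (E ∪ F) = gsSet E ∪ gsSet F :=
  Set.biUnion_union E F _

lemma gsSet_biUnion {ι : Type} (s : Set ι) (f : ι → Set (KExp T A)) :
    gsSet (⋃ i ∈ s, f i) = ⋃ i ∈ s, gsSet (f i) := by
  ext z
  simp only [gsSet, Set.mem_iUnion]
  constructor
  · rintro ⟨e, ⟨i, hi, he⟩, hz⟩; exact ⟨i, hi, e, he, hz⟩
  · rintro ⟨i, hi, e, he, hz⟩; exact ⟨e, ⟨i, hi, he⟩, hz⟩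

lemma gsSet_prodSet (Γ : Set (KExp T A)) (f : KExp T A) :
    gsSet (prodSet Γ f) = fprod (gsSet Γ) (gs f) := by
  unfold prodSet
  split
  · simp [gsSet_empty, gs_test_zero, fprod_empty_right]
  · simp [gs_test_one, fprod_atomsGS_right]
  · rw [gsSet, gsSet, fprod_biUnion_left]
    ext z
    simp [gs]

end Semantics

section PartialDerivatives

variable {T A : Type} [DecidableEq A]

lemma gsSet_pd (α : Atom T) (p : A) (e : KExp T A) :
    gsSet (pd α p e) = gderiv α p (gs e) := by
  induction e with
  | act q =>
    ext ⟨zs, ζ⟩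
    by_cases h : p = q <;> simp [pd, gs, h, gsSet_singleton, gsSet_empty, BExp.eval]
  | test b =>
    ext z
    simp [pd, gs, gsSet_empty]
  | plus e₁ e₂ ih₁ ih₂ =>
    rw [pd, gsSet_union, ih₁, ih₂]
    ext z; simp [gs]
  | cat e₁ e₂ ih₁ ih₂ =>
    rw [pd, gsSet_union, gsSet_prodSet, ih₁, gs, gderiv_fprod]
    congr 1
    ext z
    split_ifs with h
    · simp [ih₂, (mk_nil_mem_gs_iff e₁ α).mpr h]
    · simp [gsSet_empty, mk_nil_mem_gs_iff, h]
  | star e ih =>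
    rw [pd, gsSet_prodSet, ih, gs, gderiv_fstar]

lemma gsSet_pdS (α : Atom T) (p : A) (E : Set (KExp T A)) :
    gsSet (pdS α p E) = gderiv α p (gsSet E) := by
  rw [pdS, gsSet_biUnion, gsSet, gderiv_biUnion]
  simp only [gsSet_pd]

lemma mem_gsSet_iff_foldl_pdS (w : List (Atom T × A)) (β : Atom T) (E : Set (KExp T A)) :
    (⟨w, β⟩ : GStr T A) ∈ gsSet E ↔
      ∃ e' ∈ w.foldl (fun E x => pdS x.1 x.2 E) E, Eps β e' = true := by
  induction w generalizing E with
  | nil => simp [gsSet, mk_nil_mem_gs_iff]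
  | cons a w ih =>
    rw [List.foldl_cons, ← ih, gsSet_pdS]
    rfl

end PartialDerivatives

end KAT

open KAT in
/-- Membership of a guarded string in `GS(e)` is decided by iterated partial
derivatives: `α₁p₁⋯αₙ ∈ GS(e)` iff `E_{αₙ}(e') = 1` for some
`e' ∈ Δ̂_{α₁p₁⋯α_{n-1}p_{n-1}}(e)`. -/
theorem mem_gs_iff_pdWord {T A : Type} [DecidableEq A]
    (e : KExp T A) (w : List (Atom T × A)) (β : Atom T) :
    (⟨w, β⟩ : GStr T A) ∈ gs e ↔ ∃ e' ∈ pdWord w e, Eps β e' = true := by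
  rw [← gsSet_singleton, pdWord]
  exact mem_gsSet_iff_foldl_pdS w β {e}
end

section
/- A guarded string x belongs to GS(uru) (with u = (p₁+⋯+p_k)* and r = Σᵢ bᵢpᵢb̄ᵢ' + Σⱼ cⱼc̄ⱼ') if and only if either some atom α occurring in x satisfies α ≤ cⱼ and α ≰ cⱼ' for some j, or x contains a substring αpᵢβ with α ≤ bᵢ and β ≰ bᵢ' for some i. -/
/-! Since `u` denotes every guarded string, `GS(uru)` consists of the guarded strings having a
factor in `GS(r)`. Those factors are the atoms violating some `cⱼ ≤ cⱼ'` and the strings `α pᵢ β`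
violating some `bᵢ pᵢ b̄ᵢ' = 0`, and they occur in `x` exactly as its atoms and its substrings
`α p β`. -/

namespace KAT

variable {T A : Type}

@[simp] lemma GStr.first_nil (β : Atom T) : (GStr.mk ([] : List (Atom T × A)) β).first = β := rfl

@[simp] lemma GStr.first_cons (a : Atom T × A) (l : List (Atom T × A)) (β : Atom T) :
    (GStr.mk (a :: l) β).first = a.1 := rfl

lemma atomsOf_cons (a : Atom T × A) (l : List (Atom T × A)) (β : Atom T) :
    atomsOf (⟨a :: l, β⟩ : GStr T A) = a.1 :: atomsOf ⟨l, β⟩ := rfl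

lemma triplesOf_cons (a : Atom T × A) (l : List (Atom T × A)) (β : Atom T) :
    triplesOf (⟨a :: l, β⟩ : GStr T A) =
      (a.1, a.2, (GStr.mk l β).first) :: triplesOf ⟨l, β⟩ := by
  cases l <;> rfl

/-- `m` occurs in `z` as a factor, i.e. `z = w₁ ⋄ m ⋄ w₂` for some guarded strings `w₁, w₂`. -/
def GStr.IsFactor (m z : GStr T A) : Prop :=
  ∃ l₁ l₂, z.pairs = l₁ ++ m.pairs ++ l₂ ∧ m.last = (GStr.mk l₂ z.last).first

lemma isFactor_iff_isSuffix (m x : GStr T A) :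
    m.IsFactor x ↔ ∃ l, m.pairs ++ l <:+ x.pairs ∧ m.last = (GStr.mk l x.last).first := by
  simp only [GStr.IsFactor, List.IsSuffix, List.append_assoc, eq_comm (a := x.pairs)]
  exact ⟨fun ⟨l₁, l₂, h⟩ => ⟨l₂, ⟨l₁, h.1⟩, h.2⟩, fun ⟨l₂, ⟨l₁, h₁⟩, h₂⟩ => ⟨l₁, l₂, h₁, h₂⟩⟩

lemma isFactor_atom_iff (γ : Atom T) (x : GStr T A) :
    (GStr.mk [] γ).IsFactor x ↔ γ ∈ atomsOf x := by
  obtain ⟨l, β⟩ := x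
  rw [isFactor_iff_isSuffix]
  induction l with
  | nil => simp [atomsOf]
  | cons a l ih => simp [List.suffix_cons_iff, atomsOf_cons, ← ih, or_and_right, exists_or]

lemma isFactor_step_iff (α : Atom T) (p : A) (β : Atom T) (x : GStr T A) :
    (GStr.mk [(α, p)] β).IsFactor x ↔ (α, p, β) ∈ triplesOf x := by
  obtain ⟨l, γ⟩ := x
  rw [isFactor_iff_isSuffix]
  induction l with
  | nil => simp [triplesOf]
  | cons a l ih =>
    simp [List.suffix_cons_iff, triplesOf_cons, ← ih, or_and_right, exists_or, Prod.ext_iff,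
      and_assoc]

lemma mem_fprod_univ_left (Y : Set (GStr T A)) (z : GStr T A) :
    z ∈ fprod Set.univ Y ↔ ∃ l, ∃ y ∈ Y, z = ⟨l ++ y.pairs, y.last⟩ := by
  constructor
  · rintro ⟨w, -, y, hy, -, rfl⟩
    exact ⟨w.pairs, y, hy, rfl⟩
  · rintro ⟨l, y, hy, rfl⟩
    exact ⟨⟨l, y.first⟩, trivial, y, hy, rfl, rfl⟩

lemma mem_fprod_univ_right (X : Set (GStr T A)) (z : GStr T A) :
    z ∈ fprod X Set.univ ↔
      ∃ x ∈ X, ∃ l, z.pairs = x.pairs ++ l ∧ x.last = (GStr.mk l z.last).first := by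
  constructor
  · rintro ⟨x, hx, w, -, hlast, rfl⟩
    exact ⟨x, hx, w.pairs, rfl, hlast⟩
  · rintro ⟨x, hx, l, hz, hlast⟩
    exact ⟨x, hx, ⟨l, z.last⟩, trivial, hlast, by rw [← hz]⟩

lemma mem_fprod_fprod_univ (R : Set (GStr T A)) (z : GStr T A) :
    z ∈ fprod (fprod Set.univ R) Set.univ ↔ ∃ m ∈ R, m.IsFactor z := by
  simp only [mem_fprod_univ_right, mem_fprod_univ_left, GStr.IsFactor]
  constructor
  · rintro ⟨_, ⟨l₁, m, hm, rfl⟩, l₂, hz, hlast⟩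
    exact ⟨m, hm, l₁, l₂, hz, hlast⟩
  · rintro ⟨m, hm, l₁, l₂, hz, hlast⟩
    exact ⟨_, ⟨l₁, m, hm, rfl⟩, l₂, hz, hlast⟩

lemma fstar_eq_univ {X : Set (GStr T A)} (hX : ∀ a β, (⟨[a], β⟩ : GStr T A) ∈ X) :
    fstar X = Set.univ := by
  refine Set.eq_univ_of_forall fun ⟨l, β⟩ => Set.mem_iUnion.2 ⟨l.length, ?_⟩
  induction l with
  | nil => rfl
  | cons a l ih => exact ⟨⟨[a], (GStr.mk l β).first⟩, hX _ _, ⟨l, β⟩, ih, rfl, rfl⟩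

lemma mem_gs_act (p : A) (z : GStr T A) :
    z ∈ gs (.act p : KExp T A) ↔ ∃ α β, z = ⟨[(α, p)], β⟩ := Iff.rfl

lemma mem_gs_test (b : BExp T) (z : GStr T A) :
    z ∈ gs (.test b : KExp T A) ↔ z.pairs = [] ∧ b.eval z.last = true := Iff.rfl

lemma mem_gs_sumList (L : List (KExp T A)) (z : GStr T A) :
    z ∈ gs (sumList L) ↔ ∃ e ∈ L, z ∈ gs e := by
  induction L with
  | nil => simp [sumList, gs, BExp.eval]
  | cons e L ih => simp [sumList, gs, ← ih]

lemma mem_gs_test_cat (b : BExp T) (e : KExp T A) (z : GStr T A) :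
    z ∈ gs (.cat (.test b) e) ↔ z ∈ gs e ∧ b.eval z.first = true := by
  constructor
  · rintro ⟨⟨_, γ⟩, ⟨rfl, hb⟩, y, hy, rfl, rfl⟩
    exact ⟨hy, hb⟩
  · rintro ⟨hz, hb⟩
    exact ⟨⟨[], z.first⟩, ⟨rfl, hb⟩, z, hz, rfl, rfl⟩

lemma mem_gs_cat_test (e : KExp T A) (b : BExp T) (z : GStr T A) :
    z ∈ gs (.cat e (.test b)) ↔ z ∈ gs e ∧ b.eval z.last = true := by
  constructor
  · rintro ⟨x, hx, ⟨_, γ⟩, ⟨rfl, hb⟩, rfl, rfl⟩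
    exact ⟨by simpa using hx, hb⟩
  · rintro ⟨hz, hb⟩
    exact ⟨z, hz, ⟨[], z.last⟩, ⟨rfl, hb⟩, rfl, by simp⟩

lemma mem_gs_test_test (b c : BExp T) (z : GStr T A) :
    z ∈ gs (.cat (.test b) (.test c)) ↔
      z.pairs = [] ∧ b.eval z.last = true ∧ c.eval z.last = true := by
  obtain ⟨l, γ⟩ := z
  rw [mem_gs_test_cat, mem_gs_test]
  constructor
  · rintro ⟨⟨rfl, hc⟩, hb⟩
    exact ⟨rfl, hb, hc⟩
  · rintro ⟨rfl, hb, hc⟩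
    exact ⟨⟨rfl, hc⟩, hb⟩

lemma mem_gs_test_act_test (b : BExp T) (p : A) (b' : BExp T) (z : GStr T A) :
    z ∈ gs (.cat (.cat (.test b) (.act p)) (.test b')) ↔
      ∃ α β, z = ⟨[(α, p)], β⟩ ∧ b.eval α = true ∧ b'.eval β = true := by
  rw [mem_gs_cat_test, mem_gs_test_cat, mem_gs_act]
  constructor
  · rintro ⟨⟨⟨α, β, rfl⟩, hb⟩, hb'⟩
    exact ⟨α, β, rfl, hb, hb'⟩
  · rintro ⟨α, β, rfl, hb, hb'⟩
    exact ⟨⟨⟨α, β, rfl⟩, hb⟩, hb'⟩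

lemma gs_uExp {ps : List A} (hps : ∀ p : A, p ∈ ps) : gs (uExp ps : KExp T A) = Set.univ :=
  fstar_eq_univ fun a β =>
    (mem_gs_sumList _ _).2 ⟨.act a.2, List.mem_map_of_mem (hps a.2), a.1, β, rfl⟩

lemma mem_gs_uru {ps : List A} (hps : ∀ p : A, p ∈ ps) (G : Gamma T A) (z : GStr T A) :
    z ∈ gs (uru G ps) ↔ ∃ m ∈ gs (rExp G), m.IsFactor z := by
  rw [← mem_fprod_fprod_univ, ← gs_uExp hps]
  rfl

lemma mem_gs_rExp (G : Gamma T A) (m : GStr T A) :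
    m ∈ gs (rExp G) ↔
      (∃ cc ∈ G.ineqs, m.pairs = [] ∧ cc.1.eval m.last = true ∧ cc.2.eval m.last = false) ∨
      (∃ eq ∈ G.eqns, ∃ α β, m = ⟨[(α, eq.2.1)], β⟩ ∧
        eq.1.eval α = true ∧ eq.2.2.eval β = false) := by
  simp only [rExp, mem_gs_sumList, List.mem_append, or_and_right, exists_or, List.mem_map,
    exists_exists_and_eq_and, mem_gs_test_act_test, mem_gs_test_test, BExp.eval,
    Bool.not_eq_true', or_comm]

end KAT

open KAT in
theorem mem_gs_uru_iff_general {T A : Type}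
    (G : Gamma T A) (ps : List A) (hps : ∀ p : A, p ∈ ps) (x : GStr T A) :
    x ∈ gs (uru G ps) ↔
      (∃ α ∈ atomsOf x, ∃ cc ∈ G.ineqs, cc.1.eval α = true ∧ cc.2.eval α = false) ∨
      (∃ tr ∈ triplesOf x, ∃ eq ∈ G.eqns,
        eq.2.1 = tr.2.1 ∧ eq.1.eval tr.1 = true ∧ eq.2.2.eval tr.2.2 = false) := by
  rw [mem_gs_uru hps]
  constructor
  · rintro ⟨⟨l, γ⟩, hm, hfac⟩
    rcases (mem_gs_rExp G _).1 hm with ⟨cc, hcc, rfl, h₁, h₂⟩ | ⟨eq, heq, α, β, hm, h₁, h₂⟩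
    · exact Or.inl ⟨γ, (isFactor_atom_iff γ x).1 hfac, cc, hcc, h₁, h₂⟩
    · rw [hm] at hfac
      exact Or.inr ⟨_, (isFactor_step_iff _ _ _ x).1 hfac, eq, heq, rfl, h₁, h₂⟩
  · rintro (⟨γ, hγ, cc, hcc, h₁, h₂⟩ | ⟨⟨α, p, β⟩, htr, eq, heq, rfl, h₁, h₂⟩)
    · exact ⟨_, (mem_gs_rExp G _).2 (Or.inl ⟨cc, hcc, rfl, h₁, h₂⟩),
        (isFactor_atom_iff γ x).2 hγ⟩
    · exact ⟨_, (mem_gs_rExp G _).2 (Or.inr ⟨eq, heq, α, β, rfl, h₁, h₂⟩),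
        (isFactor_step_iff _ _ _ x).2 htr⟩

open KAT in
/-- Characterization of membership in `GS(uru)`. -/
theorem mem_gs_uru_iff {T A : Type} [DecidableEq A]
    (G : Gamma T A) (ps : List A) (hps : ∀ p : A, p ∈ ps) (x : GStr T A) :
    x ∈ gs (uru G ps) ↔
      (∃ α ∈ atomsOf x, ∃ cc ∈ G.ineqs, cc.1.eval α = true ∧ cc.2.eval α = false) ∨
      (∃ tr ∈ triplesOf x, ∃ eq ∈ G.eqns,
        eq.2.1 = tr.2.1 ∧ eq.1.eval tr.1 = true ∧ eq.2.2.eval tr.2.2 = false) :=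
  mem_gs_uru_iff_general G ps hps x
end
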